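/- With f ∈ S_1 as above, for every t ∈ ℝ the diagonal operator T(t) on ℓ₂(Δ) given by (T(t)c)_n = e^{i t f(n)} c_n is a bounded operator, T(t+s) = T(t)T(s), T(0) = I, and t ↦ T(t)c is continuous for each c; moreover there is a degree-1 polynomial p with positive coefficients such that ‖T(t)‖ ≤ p(|t|) for all t ∈ ℝ. -/

import Mathlib

open Filter Topology

/-- Membership in `ℓ₂(Δ)` (convention `c 0 = 0`). -/
def InSp (c : ℕ → ℂ) : Prop := c 0 = 0 ∧ Summable fun n => ‖c (n + 1) - c n‖ ^ 2

/-- The `ℓ₂(Δ)` norm `‖c‖ = ‖Δc‖_{ℓ₂}`. -/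
noncomputable def dN (c : ℕ → ℂ) : ℝ := Real.sqrt (∑' n : ℕ, ‖c (n + 1) - c n‖ ^ 2)

/-- The multiplication operators `(T(t)c)_n = e^{itf(n)} c_n`. -/
noncomputable def Tmap (f : ℕ → ℝ) (t : ℝ) (c : ℕ → ℂ) : ℕ → ℂ :=
  fun n => Complex.exp (Complex.I * (t : ℂ) * (f n : ℂ)) * c n

/-!
With `e n = exp (i t f n)` one has `Δ(T(t)c) n = e (n+1) Δc n + (e (n+1) - e n) c n`, and
`|e (n+1) - e n| ≤ |t| |f (n+1) - f n| ≤ |t| C / (n+1)`. The second term is therefore controlled by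
the discrete Hardy inequality `∑ (|c n| / (n+1))² ≤ 4 ∑ |Δc n|²` (here `c 0 = 0` is essential),
which gives `‖T(t)c‖² ≤ (2 + 8 C² t²) ‖c‖²`. The same termwise domination, together with the
continuity of each coordinate in `t`, gives strong continuity by dominated convergence.
-/

open Finset

noncomputable def cesaroMean (a : ℕ → ℝ) (n : ℕ) : ℝ := (∑ k ∈ range (n + 1), a k) / (n + 1)

lemma succ_mul_cesaroMean (a : ℕ → ℝ) (n : ℕ) :
    ((n : ℝ) + 1) * cesaroMean a n = ∑ k ∈ range (n + 1), a k := by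
  unfold cesaroMean
  field_simp

-- Elliott's proof of Hardy's inequality: for `M = cesaroMean a`, the identity
-- `a n = (n + 1) M n - n M (n - 1)` and `2xy ≤ x² + y²` make
-- `M n ^ 2 - 2 a n M n ≤ n M (n - 1) ^ 2 - (n + 1) M n ^ 2` telescope.
lemma sum_range_succ_sq_cesaroMean_sub_le (a : ℕ → ℝ) (N : ℕ) :
    ∑ n ∈ range (N + 1), (cesaroMean a n ^ 2 - 2 * a n * cesaroMean a n)
      ≤ -((N : ℝ) + 1) * cesaroMean a N ^ 2 := by
  induction N with
  | zero =>
    simp only [zero_add, range_one, sum_singleton, cesaroMean, Nat.cast_zero, div_one]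
    linarith [sq (a 0)]
  | succ N ih =>
    have hstep : a (N + 1) = ((N : ℝ) + 2) * cesaroMean a (N + 1)
        - ((N : ℝ) + 1) * cesaroMean a N := by
      have h := succ_mul_cesaroMean a (N + 1)
      rw [sum_range_succ, ← succ_mul_cesaroMean] at h
      push_cast at h
      linarith
    rw [sum_range_succ, hstep]
    push_cast
    nlinarith [sq_nonneg (cesaroMean a (N + 1) - cesaroMean a N)]

theorem sum_range_sq_cesaroMean_le (a : ℕ → ℝ) (N : ℕ) :
    ∑ n ∈ range N, cesaroMean a n ^ 2 ≤ 4 * ∑ n ∈ range N, a n ^ 2 := by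
  obtain _ | N := N
  · simp
  have hXZ : ∑ n ∈ range (N + 1), cesaroMean a n ^ 2
      ≤ 2 * ∑ n ∈ range (N + 1), a n * cesaroMean a n := by
    have h := sum_range_succ_sq_cesaroMean_sub_le a N
    simp only [sum_sub_distrib, mul_assoc, ← mul_sum] at h
    nlinarith [sq_nonneg (cesaroMean a N)]
  have hCS := sum_mul_sq_le_sq_mul_sq (range (N + 1)) a (cesaroMean a)
  have hX : 0 ≤ ∑ n ∈ range (N + 1), cesaroMean a n ^ 2 := sum_nonneg fun _ _ => sq_nonneg _
  have hY : 0 ≤ ∑ n ∈ range (N + 1), a n ^ 2 := sum_nonneg fun _ _ => sq_nonneg _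
  nlinarith

section HardyTsum

variable {a : ℕ → ℝ}

lemma sum_range_sq_cesaroMean_le_tsum (ha : Summable fun n => a n ^ 2) (N : ℕ) :
    ∑ n ∈ range N, cesaroMean a n ^ 2 ≤ 4 * ∑' n, a n ^ 2 :=
  (sum_range_sq_cesaroMean_le a N).trans <|
    mul_le_mul_of_nonneg_left (ha.sum_le_tsum _ fun _ _ => sq_nonneg _) (by norm_num)

theorem summable_sq_cesaroMean (ha : Summable fun n => a n ^ 2) :
    Summable fun n => cesaroMean a n ^ 2 :=
  summable_of_sum_range_le (fun _ => sq_nonneg _) (sum_range_sq_cesaroMean_le_tsum ha)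

theorem tsum_sq_cesaroMean_le (ha : Summable fun n => a n ^ 2) :
    ∑' n, cesaroMean a n ^ 2 ≤ 4 * ∑' n, a n ^ 2 :=
  (summable_sq_cesaroMean ha).tsum_le_of_sum_range_le (sum_range_sq_cesaroMean_le_tsum ha)

end HardyTsum

section DiscreteHardy

variable {E : Type*} [SeminormedAddCommGroup E] {c : ℕ → E}

theorem norm_div_succ_le_cesaroMean (h0 : c 0 = 0) (n : ℕ) :
    ‖c n‖ / (n + 1) ≤ cesaroMean (fun k => ‖c (k + 1) - c k‖) n := by
  have htelescope : ‖c n‖ ≤ ∑ k ∈ range (n + 1), ‖c (k + 1) - c k‖ := by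
    have h := dist_le_range_sum_dist c n
    simp only [h0, dist_eq_norm', sub_zero] at h
    exact h.trans (sum_le_sum_of_subset_of_nonneg (range_subset_range.2 n.le_succ)
      fun _ _ _ => norm_nonneg _)
  exact div_le_div_of_nonneg_right htelescope (by positivity)

lemma sq_norm_div_succ_le_sq_cesaroMean (h0 : c 0 = 0) (n : ℕ) :
    (‖c n‖ / (n + 1)) ^ 2 ≤ cesaroMean (fun k => ‖c (k + 1) - c k‖) n ^ 2 :=
  pow_le_pow_left₀ (by positivity) (norm_div_succ_le_cesaroMean h0 n) 2

theorem summable_sq_norm_div_succ (h0 : c 0 = 0)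
    (hd : Summable fun n => ‖c (n + 1) - c n‖ ^ 2) :
    Summable fun n => (‖c n‖ / (n + 1)) ^ 2 :=
  (summable_sq_cesaroMean hd).of_nonneg_of_le (fun _ => sq_nonneg _)
    (sq_norm_div_succ_le_sq_cesaroMean h0)

theorem tsum_sq_norm_div_succ_le (h0 : c 0 = 0)
    (hd : Summable fun n => ‖c (n + 1) - c n‖ ^ 2) :
    ∑' n, (‖c n‖ / (n + 1)) ^ 2 ≤ 4 * ∑' n, ‖c (n + 1) - c n‖ ^ 2 :=
  ((summable_sq_norm_div_succ h0 hd).tsum_le_tsum (sq_norm_div_succ_le_sq_cesaroMean h0)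
    (summable_sq_cesaroMean hd)).trans (tsum_sq_cesaroMean_le hd)

end DiscreteHardy

section SquareSums

variable {E : Type*} [SeminormedAddCommGroup E] {u : ℕ → E} {v w : ℕ → ℝ}

lemma sq_norm_le_two_mul_of_norm_le_add (h : ∀ n, ‖u n‖ ≤ v n + w n) (n : ℕ) :
    ‖u n‖ ^ 2 ≤ 2 * (v n ^ 2 + w n ^ 2) :=
  (pow_le_pow_left₀ (norm_nonneg _) (h n) 2).trans add_sq_le

theorem summable_sq_norm_of_norm_le_add (h : ∀ n, ‖u n‖ ≤ v n + w n)
    (hv : Summable fun n => v n ^ 2) (hw : Summable fun n => w n ^ 2) :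
    Summable fun n => ‖u n‖ ^ 2 :=
  ((hv.add hw).mul_left 2).of_nonneg_of_le (fun _ => sq_nonneg _)
    (sq_norm_le_two_mul_of_norm_le_add h)

theorem tsum_sq_norm_le_of_norm_le_add (h : ∀ n, ‖u n‖ ≤ v n + w n)
    (hv : Summable fun n => v n ^ 2) (hw : Summable fun n => w n ^ 2) :
    ∑' n, ‖u n‖ ^ 2 ≤ 2 * (∑' n, v n ^ 2 + ∑' n, w n ^ 2) := by
  rw [← hv.tsum_add hw, ← tsum_mul_left]
  exact (summable_sq_norm_of_norm_le_add h hv hw).tsum_le_tsum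
    (sq_norm_le_two_mul_of_norm_le_add h) ((hv.add hw).mul_left 2)

end SquareSums

def IncrementBound (f : ℕ → ℝ) (C : ℝ) : Prop :=
  ∀ n : ℕ, 2 ≤ n → (n : ℝ) * |f n - f (n - 1)| ≤ C

namespace IncrementBound

variable {f : ℕ → ℝ} {C : ℝ}

lemma nonneg (hC : IncrementBound f C) : 0 ≤ C :=
  (by positivity : (0 : ℝ) ≤ (2 : ℕ) * |f 2 - f (2 - 1)|).trans (hC 2 le_rfl)

lemma abs_succ_sub_mul_norm_le {E : Type*} [SeminormedAddCommGroup E]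
    (hC : IncrementBound f C) {c : ℕ → E} (h0 : c 0 = 0) (n : ℕ) :
    |f (n + 1) - f n| * ‖c n‖ ≤ C * (‖c n‖ / (n + 1)) := by
  obtain _ | m := n
  · simp [h0]
  have h := hC (m + 2) (by omega)
  rw [mul_div_assoc', le_div_iff₀ (by positivity), mul_right_comm]
  gcongr
  simpa [add_assoc, one_add_one_eq_two, mul_comm] using h

end IncrementBound

open Complex in
lemma Complex.norm_exp_I_mul_ofReal_sub_exp_le (x y : ℝ) :
    ‖exp (I * x) - exp (I * y)‖ ≤ |x - y| := by
  have h : exp (I * x) - exp (I * y) = exp (I * y) * (exp (I * ↑(x - y)) - 1) := by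
    rw [mul_sub, ← exp_add]
    push_cast
    ring_nf
  rw [h, norm_mul, norm_exp_I_mul_ofReal, one_mul]
  exact Real.norm_exp_I_mul_ofReal_sub_one_le

section Tmap

variable {f : ℕ → ℝ} {C : ℝ} {c : ℕ → ℂ}

lemma Tmap_add (f : ℕ → ℝ) (t s : ℝ) (c : ℕ → ℂ) :
    Tmap f (t + s) c = Tmap f t (Tmap f s c) := by
  funext n
  simp only [Tmap, ← mul_assoc, ← Complex.exp_add]
  push_cast
  ring_nf

lemma Tmap_zero (f : ℕ → ℝ) (c : ℕ → ℂ) : Tmap f 0 c = c := by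
  funext n
  simp [Tmap]

lemma Tmap_apply (f : ℕ → ℝ) (t : ℝ) (c : ℕ → ℂ) (n : ℕ) :
    Tmap f t c n = Complex.exp (Complex.I * ↑(t * f n)) * c n := by
  simp only [Tmap]
  push_cast
  ring_nf

theorem norm_Tmap_succ_sub_le (hC : IncrementBound f C) (t : ℝ) (h0 : c 0 = 0) (n : ℕ) :
    ‖Tmap f t c (n + 1) - Tmap f t c n‖
      ≤ ‖c (n + 1) - c n‖ + |t| * C * (‖c n‖ / (n + 1)) := by
  set e : ℕ → ℂ := fun k => Complex.exp (Complex.I * ↑(t * f k))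
  have hsplit : Tmap f t c (n + 1) - Tmap f t c n
      = e (n + 1) * (c (n + 1) - c n) + (e (n + 1) - e n) * c n := by
    simp only [Tmap_apply, e]
    ring
  have hphase : ‖e (n + 1) - e n‖ ≤ |t| * |f (n + 1) - f n| := by
    refine (Complex.norm_exp_I_mul_ofReal_sub_exp_le _ _).trans_eq ?_
    rw [← mul_sub, abs_mul]
  calc ‖Tmap f t c (n + 1) - Tmap f t c n‖
      ≤ ‖e (n + 1)‖ * ‖c (n + 1) - c n‖ + ‖e (n + 1) - e n‖ * ‖c n‖ := by
        rw [hsplit, ← norm_mul, ← norm_mul]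
        exact norm_add_le _ _
    _ ≤ ‖c (n + 1) - c n‖ + |t| * (|f (n + 1) - f n| * ‖c n‖) := by
        rw [Complex.norm_exp_I_mul_ofReal, one_mul, ← mul_assoc]
        gcongr
    _ ≤ ‖c (n + 1) - c n‖ + |t| * C * (‖c n‖ / (n + 1)) := by
        rw [mul_assoc |t|]
        exact (add_le_add_iff_left _).2
          (mul_le_mul_of_nonneg_left (hC.abs_succ_sub_mul_norm_le h0 n) (abs_nonneg t))

lemma InSp.summable_sq_mul_norm_div_succ (hc : InSp c) (a : ℝ) :
    Summable fun n => (a * (‖c n‖ / (n + 1))) ^ 2 := by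
  simpa only [mul_pow] using (summable_sq_norm_div_succ hc.1 hc.2).mul_left (a ^ 2)

theorem InSp.Tmap (hC : IncrementBound f C) (hc : InSp c) (t : ℝ) : InSp (Tmap f t c) :=
  ⟨by simp [_root_.Tmap, hc.1],
    summable_sq_norm_of_norm_le_add (norm_Tmap_succ_sub_le hC t hc.1) hc.2
      (hc.summable_sq_mul_norm_div_succ _)⟩

theorem dN_Tmap_le (hC : IncrementBound f C) (hc : InSp c) (t : ℝ) :
    dN (Tmap f t c) ≤ (2 + 3 * C * |t|) * dN c := by
  set S := ∑' n, ‖c (n + 1) - c n‖ ^ 2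
  have hsum : ∑' n, ‖Tmap f t c (n + 1) - Tmap f t c n‖ ^ 2 ≤ (2 + 8 * (C * t) ^ 2) * S :=
    calc ∑' n, ‖Tmap f t c (n + 1) - Tmap f t c n‖ ^ 2
        ≤ 2 * (S + ∑' n, (|t| * C * (‖c n‖ / (n + 1))) ^ 2) :=
          tsum_sq_norm_le_of_norm_le_add (norm_Tmap_succ_sub_le hC t hc.1) hc.2
            (hc.summable_sq_mul_norm_div_succ _)
      _ = 2 * (S + (C * t) ^ 2 * ∑' n, (‖c n‖ / (n + 1)) ^ 2) := by
          simp only [mul_pow _ (_ / _), tsum_mul_left, mul_comm |t|, mul_pow C, sq_abs]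
      _ ≤ 2 * (S + (C * t) ^ 2 * (4 * S)) := by
          gcongr
          exact tsum_sq_norm_div_succ_le hc.1 hc.2
      _ = (2 + 8 * (C * t) ^ 2) * S := by ring
  have hroot : √(2 + 8 * (C * t) ^ 2) ≤ 2 + 3 * C * |t| := by
    have hCt : 0 ≤ C * |t| := mul_nonneg hC.nonneg (abs_nonneg t)
    rw [Real.sqrt_le_iff, mul_pow, ← sq_abs t, ← mul_pow, mul_assoc]
    constructor <;> nlinarith
  calc dN (Tmap f t c) ≤ √((2 + 8 * (C * t) ^ 2) * S) := Real.sqrt_le_sqrt hsum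
    _ = √(2 + 8 * (C * t) ^ 2) * dN c := Real.sqrt_mul (by positivity) S
    _ ≤ (2 + 3 * C * |t|) * dN c := mul_le_mul_of_nonneg_right hroot (Real.sqrt_nonneg _)

theorem tendsto_dN_Tmap_sub (hC : IncrementBound f C) (hc : InSp c) (t₀ : ℝ) :
    Tendsto (fun t => dN (Tmap f t c - Tmap f t₀ c)) (𝓝 t₀) (𝓝 0) := by
  set K := (2 * |t₀| + 1) * C
  set D : ℝ → ℕ → ℂ := fun t n =>
    (Tmap f t c - Tmap f t₀ c) (n + 1) - (Tmap f t c - Tmap f t₀ c) n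
  have hpointwise : ∀ n, Tendsto (fun t => ‖D t n‖ ^ 2) (𝓝 t₀) (𝓝 0) := fun n =>
    (show Continuous fun t => ‖D t n‖ ^ 2 by simp only [D, Pi.sub_apply, Tmap]; fun_prop)
      |>.tendsto' t₀ 0 (by simp [D])
  have hdominated : ∀ᶠ t in 𝓝 t₀, ∀ n,
      ‖D t n‖ ≤ 2 * ‖c (n + 1) - c n‖ + K * (‖c n‖ / (n + 1)) := by
    filter_upwards [Metric.ball_mem_nhds t₀ one_pos] with t hball n
    have habs : |t| + |t₀| ≤ 2 * |t₀| + 1 := by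
      have := abs_sub_abs_le_abs_sub t t₀
      rw [Metric.mem_ball, Real.dist_eq] at hball
      linarith
    have hq : 0 ≤ C * (‖c n‖ / (n + 1)) := mul_nonneg hC.nonneg (by positivity)
    calc ‖D t n‖
        ≤ ‖Tmap f t c (n + 1) - Tmap f t c n‖ + ‖Tmap f t₀ c (n + 1) - Tmap f t₀ c n‖ := by
          simp only [D, Pi.sub_apply, sub_sub_sub_comm]
          exact norm_sub_le _ _
      _ ≤ ‖c (n + 1) - c n‖ + |t| * C * (‖c n‖ / (n + 1))
          + (‖c (n + 1) - c n‖ + |t₀| * C * (‖c n‖ / (n + 1))) :=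
          add_le_add (norm_Tmap_succ_sub_le hC t hc.1 n) (norm_Tmap_succ_sub_le hC t₀ hc.1 n)
      _ ≤ 2 * ‖c (n + 1) - c n‖ + K * (‖c n‖ / (n + 1)) := by
          nlinarith [mul_le_mul_of_nonneg_right habs hq]
  have hsum : Tendsto (fun t => ∑' n, ‖D t n‖ ^ 2) (𝓝 t₀) (𝓝 0) := by
    simpa using tendsto_tsum_of_dominated_convergence (g := fun _ => (0 : ℝ))
      (bound := fun n => 2 * ((2 * ‖c (n + 1) - c n‖) ^ 2 + (K * (‖c n‖ / (n + 1))) ^ 2))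
      (((hc.2.mul_left (2 ^ 2)).add (hc.summable_sq_mul_norm_div_succ K)).mul_left 2 |>.congr
        fun n => by simp only [mul_pow])
      hpointwise (hdominated.mono fun t ht n => by
        rw [norm_pow, norm_norm]
        exact sq_norm_le_two_mul_of_norm_le_add ht n)
  exact (Real.sqrt_zero ▸ Real.continuous_sqrt.tendsto 0).comp hsum

end Tmap

theorem stmt11_general (f : ℕ → ℝ) (C : ℝ)
    (hC : ∀ n : ℕ, 2 ≤ n → (n : ℝ) * |f n - f (n - 1)| ≤ C) :
    (∀ (t : ℝ) (c : ℕ → ℂ), InSp c → InSp (Tmap f t c)) ∧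
    (∃ a b : ℝ, 0 < a ∧ 0 < b ∧ ∀ (t : ℝ) (c : ℕ → ℂ), InSp c →
      dN (Tmap f t c) ≤ (a + b * |t|) * dN c) ∧
    (∀ (t s : ℝ) (c : ℕ → ℂ), Tmap f (t + s) c = Tmap f t (Tmap f s c)) ∧
    (∀ c : ℕ → ℂ, Tmap f 0 c = c) ∧
    (∀ c : ℕ → ℂ, InSp c → ∀ t₀ : ℝ,
      Tendsto (fun t : ℝ => dN (Tmap f t c - Tmap f t₀ c)) (nhds t₀) (nhds 0)) := by
  have hC : IncrementBound f C := hC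
  refine ⟨fun t c hc => hc.Tmap hC t, ⟨2, 3 * C + 1, two_pos, by linarith [hC.nonneg], ?_⟩,
    Tmap_add f, Tmap_zero f, fun c hc t₀ => tendsto_dN_Tmap_sub hC hc t₀⟩
  intro t c hc
  refine (dN_Tmap_le hC hc t).trans (mul_le_mul_of_nonneg_right ?_ (Real.sqrt_nonneg _))
  nlinarith [abs_nonneg t]

/-- For `f ∈ S₁`, the operators `T(t)` form a `C₀`-group on `ℓ₂(Δ)`: each `T(t)` maps
the space into itself and is bounded by a degree-1 polynomial `a + b|t|` with positive
coefficients, `T(t+s) = T(t)T(s)`, `T(0) = I`, and `t ↦ T(t)c` is continuous. -/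
theorem stmt11 (f : ℕ → ℝ) (C : ℝ) (hf : Tendsto f atTop atTop)
    (hC : ∀ n : ℕ, 2 ≤ n → (n : ℝ) * |f n - f (n - 1)| ≤ C) :
    (∀ (t : ℝ) (c : ℕ → ℂ), InSp c → InSp (Tmap f t c)) ∧
    (∃ a b : ℝ, 0 < a ∧ 0 < b ∧ ∀ (t : ℝ) (c : ℕ → ℂ), InSp c →
      dN (Tmap f t c) ≤ (a + b * |t|) * dN c) ∧
    (∀ (t s : ℝ) (c : ℕ → ℂ), Tmap f (t + s) c = Tmap f t (Tmap f s c)) ∧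
    (∀ c : ℕ → ℂ, Tmap f 0 c = c) ∧
    (∀ c : ℕ → ℂ, InSp c → ∀ t₀ : ℝ,
      Tendsto (fun t : ℝ => dN (Tmap f t c - Tmap f t₀ c)) (nhds t₀) (nhds 0)) :=
  stmt11_general f C hC
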